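/- In model M, for all n ≥ 1 and s ≥ 1 the s-th moment satisfies the recurrence E(W_n^s) = α_{n−1,s}·E(W_{n−1}^s) + β_{n−1,s}, where α_{n,s} := Σ_{ℓ=0}^{s} c^ℓ·C(s,ℓ)·C(m,ℓ)/C(T_n,ℓ) and β_{n,s} := Σ_{i=2}^{s} E(W_n^{s+1−i}) · Σ_{ℓ=i}^{s} C(s,ℓ)·c^ℓ · Σ_{j=ℓ+1−i}^{ℓ} (−1)^{j+i−1−ℓ} · S(ℓ,j)·c₁(j, ℓ+1−i)·C(m,j)/C(T_n,j). -/

import Mathlib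

open Finset

/-- Total number of balls after `n` draws: `T_n = W_0 + B_0 + n·m·c`. -/
def urnT (W0 B0 m c n : ℕ) : ℕ := W0 + B0 + n * m * c

/-- Probability mass function of the number of white balls after `n` draws in the
Chen–Wei model `M` (at each step `m` balls are drawn without replacement and, for
each drawn ball, `c` balls of the same color are added). -/
noncomputable def massM (W0 B0 m c : ℕ) : ℕ → ℕ → ℝ
  | 0 => fun v => if v = W0 then 1 else 0
  | n + 1 => fun v =>
      ∑ w ∈ Finset.range (urnT W0 B0 m c n + 1), ∑ k ∈ Finset.range (m + 1),
        if v = w + c * k then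
          massM W0 B0 m c n w *
            ((Nat.choose w k * Nat.choose (urnT W0 B0 m c n - w) (m - k) : ℝ) /
              (Nat.choose (urnT W0 B0 m c n) m : ℝ))
        else 0

/-- The `s`-th moment `E(W_n^s)` of the number of white balls in model `M`. -/
noncomputable def momM (W0 B0 m c s n : ℕ) : ℝ :=
  ∑ w ∈ Finset.range (urnT W0 B0 m c n + 1), massM W0 B0 m c n w * (w : ℝ) ^ s

/-- Stirling numbers of the second kind `S(n,k)`. -/
def stirling2 : ℕ → ℕ → ℕ
  | 0, 0 => 1
  | 0, _ + 1 => 0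
  | _ + 1, 0 => 0
  | n + 1, k + 1 => (k + 1) * stirling2 n (k + 1) + stirling2 n k

/-- Unsigned Stirling numbers of the first kind `c₁(n,k)`. -/
def stirling1 : ℕ → ℕ → ℕ
  | 0, 0 => 1
  | 0, _ + 1 => 0
  | _ + 1, 0 => 0
  | n + 1, k + 1 => n * stirling1 n (k + 1) + stirling1 n k

/-- The coefficient `α_{n,s}` of the moment recurrence in model `M`. -/
noncomputable def alphaM (W0 B0 m c n s : ℕ) : ℝ :=
  ∑ ℓ ∈ Finset.range (s + 1),
    (c : ℝ) ^ ℓ * (Nat.choose s ℓ * Nat.choose m ℓ : ℝ) /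
      (Nat.choose (urnT W0 B0 m c n) ℓ : ℝ)

/-- The inhomogeneous term `β_{n,s}` of the moment recurrence in model `M`. -/
noncomputable def betaM (W0 B0 m c n s : ℕ) : ℝ :=
  ∑ i ∈ Finset.Icc 2 s, momM W0 B0 m c (s + 1 - i) n *
    ∑ ℓ ∈ Finset.Icc i s, (Nat.choose s ℓ : ℝ) * (c : ℝ) ^ ℓ *
      ∑ j ∈ Finset.Icc (ℓ + 1 - i) ℓ, (-1 : ℝ) ^ (j + i - 1 - ℓ) *
        (stirling2 ℓ j * stirling1 j (ℓ + 1 - i) * Nat.choose m j : ℝ) /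
        (Nat.choose (urnT W0 B0 m c n) j : ℝ)

/-!
Given `W_n = w`, the number `K` of white balls among the `m` drawn is hypergeometric and
`W_{n+1} = w + cK`. Expand `(w + cK)^s` binomially, write `K^ℓ = ∑_j S(ℓ,j) (K)_j`, use the
hypergeometric factorial moments `E[(K)_j] = (w)_j C(m,j) / C(T_n,j)` and expand
`(w)_j = ∑_r (-1)^(j-r) c₁(j,r) w^r`: the conditional moment `E[W_{n+1}^s | W_n = w]` becomes a
polynomial in `w`. Taking expectations, the terms with `r = j = ℓ` produce `α_{n,s} E(W_n^s)`,
and the remaining ones, indexed by `i = ℓ + 1 - r`, produce `β_{n,s}`.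
-/

open Polynomial

theorem stirling1_eq_stirlingFirst : stirling1 = Nat.stirlingFirst := by
  funext n k
  induction n generalizing k with
  | zero => cases k <;> rfl
  | succ n ih =>
    cases k with
    | zero => rfl
    | succ k => rw [Nat.stirlingFirst_succ_succ, ← ih, ← ih]; rfl

theorem stirling2_eq_stirlingSecond : stirling2 = Nat.stirlingSecond := by
  funext n k
  induction n generalizing k with
  | zero => cases k <;> rfl
  | succ n ih =>
    cases k with
    | zero => rfl
    | succ k => rw [Nat.stirlingSecond_succ_succ, ← ih, ← ih]; rfl

section Stirling

variable {R : Type*} [CommRing R]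

theorem ascPochhammer_eval_eq_sum_stirlingFirst (x : R) (n : ℕ) :
    (ascPochhammer R n).eval x = ∑ k ∈ range (n + 1), (n.stirlingFirst k : R) * x ^ k := by
  induction n with
  | zero => simp
  | succ n ih =>
    have hshift : ∑ k ∈ range (n + 1), (n.stirlingFirst k : R) * x ^ k * n =
        ∑ k ∈ range (n + 1), (n * n.stirlingFirst (k + 1) : R) * x ^ (k + 1) := by
      have h0 : (n.stirlingFirst 0 : R) * x ^ 0 * n = 0 := by rcases n with _ | n <;> simp
      rw [sum_range_succ', sum_range_succ, Nat.stirlingFirst_eq_zero_of_lt n.lt_succ_self, h0]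
      simp only [Nat.cast_zero, zero_mul, mul_zero, add_zero]
      exact sum_congr rfl fun _ _ => by ring
    calc (ascPochhammer R (n + 1)).eval x
        = ∑ k ∈ range (n + 1), (n.stirlingFirst k : R) * x ^ (k + 1) +
            ∑ k ∈ range (n + 1), (n.stirlingFirst k : R) * x ^ k * n := by
          simp only [ascPochhammer_succ_eval, ih, mul_add, sum_mul, pow_succ, mul_assoc]
      _ = ∑ k ∈ range (n + 1), ((n + 1).stirlingFirst (k + 1) : R) * x ^ (k + 1) := by
          rw [hshift, ← sum_add_distrib]
          refine sum_congr rfl fun k _ => ?_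
          rw [Nat.stirlingFirst_succ_succ]; push_cast; ring
      _ = _ := by simp [sum_range_succ' _ (n + 1)]

theorem descPochhammer_eval_eq_sum_stirlingFirst (x : R) (n : ℕ) :
    (descPochhammer R n).eval x =
      ∑ k ∈ range (n + 1), (-1) ^ (n - k) * (n.stirlingFirst k : R) * x ^ k := by
  have h := ascPochhammer_eval_neg_eq_descPochhammer R x n
  rw [ascPochhammer_eval_eq_sum_stirlingFirst] at h
  have hsq : ∀ k : ℕ, ((-1 : R) ^ k) * (-1) ^ k = 1 := fun k => by
    rw [← mul_pow]; norm_num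
  have hD : (descPochhammer R n).eval x = (-1) ^ n * ((-1) ^ n * (descPochhammer R n).eval x) := by
    rw [← mul_assoc, hsq, one_mul]
  rw [hD, ← h, mul_sum]
  refine sum_congr rfl fun k hk => ?_
  rw [← pow_sub_mul_pow (-1 : R) (Nat.le_of_lt_succ (mem_range.1 hk)), neg_pow x]
  calc _ = (-1) ^ (n - k) * (n.stirlingFirst k : R) * x ^ k * ((-1) ^ k * (-1) ^ k) := by ring
    _ = _ := by rw [hsq k, mul_one]

theorem pow_eq_sum_stirlingSecond_mul_descPochhammer_eval (x : R) (n : ℕ) :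
    x ^ n = ∑ k ∈ range (n + 1), (n.stirlingSecond k : R) * (descPochhammer R k).eval x := by
  induction n with
  | zero => simp
  | succ n ih =>
    have hshift :
        ∑ k ∈ range (n + 1), (n.stirlingSecond k : R) * (k * (descPochhammer R k).eval x) =
        ∑ k ∈ range (n + 1), ((k + 1) * n.stirlingSecond (k + 1) : R) *
          (descPochhammer R (k + 1)).eval x := by
      rw [sum_range_succ', sum_range_succ, Nat.stirlingSecond_eq_zero_of_lt n.lt_succ_self]
      simp only [Nat.cast_zero, zero_mul, mul_zero, add_zero]
      exact sum_congr rfl fun _ _ => by push_cast; ring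
    calc x ^ (n + 1)
        = ∑ k ∈ range (n + 1), (n.stirlingSecond k : R) * (descPochhammer R (k + 1)).eval x +
            ∑ k ∈ range (n + 1), (n.stirlingSecond k : R) *
              (k * (descPochhammer R k).eval x) := by
          simp only [pow_succ', ih, mul_sum, mul_left_comm x, ← sum_add_distrib, ← mul_add,
            descPochhammer_succ_eval]
          exact sum_congr rfl fun _ _ => by ring
      _ = ∑ k ∈ range (n + 1), ((n + 1).stirlingSecond (k + 1) : R) *
            (descPochhammer R (k + 1)).eval x := by
          rw [hshift, ← sum_add_distrib]
          refine sum_congr rfl fun k _ => ?_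
          rw [Nat.stirlingSecond_succ_succ]; push_cast; ring
      _ = _ := by simp [sum_range_succ' _ (n + 1)]

end Stirling

theorem sum_range_mul_sum_range_eq_diag_add_sum_Icc {R : Type*} [CommSemiring R]
    (b : ℕ → R) (a : ℕ → ℕ → R) (μ : ℕ → R) (s : ℕ)
    (ha : ∀ ℓ, 0 < ℓ → a ℓ 0 = 0) :
    ∑ ℓ ∈ range (s + 1), b ℓ * ∑ r ∈ range (ℓ + 1), a ℓ r * μ (s - ℓ + r) =
      (∑ ℓ ∈ range (s + 1), b ℓ * a ℓ ℓ) * μ s +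
        ∑ i ∈ Icc 2 s, μ (s + 1 - i) * ∑ ℓ ∈ Icc i s, b ℓ * a ℓ (ℓ + 1 - i) := by
  have hrow : ∀ ℓ ∈ range (s + 1), ∑ r ∈ range (ℓ + 1), a ℓ r * μ (s - ℓ + r) =
      a ℓ ℓ * μ s + ∑ i ∈ Icc 2 ℓ, a ℓ (ℓ + 1 - i) * μ (s + 1 - i) := by
    intro ℓ hℓ
    rw [sum_range_succ, add_comm, Nat.sub_add_cancel (Nat.lt_succ_iff.1 (mem_range.1 hℓ))]
    congr 1
    rcases Nat.eq_zero_or_pos ℓ with rfl | hℓ0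
    · simp
    rw [sum_range_eq_add_Ico _ hℓ0, ha ℓ hℓ0, zero_mul, zero_add]
    have hs : ℓ ≤ s := Nat.lt_succ_iff.1 (mem_range.1 hℓ)
    refine sum_nbij' (fun r => ℓ + 1 - r) (fun i => ℓ + 1 - i) ?_ ?_ ?_ ?_ ?_ <;>
      intro r hr <;> simp only [mem_Ico, mem_Icc] at hr ⊢ <;> try omega
    rw [show ℓ + 1 - (ℓ + 1 - r) = r by omega,
      show s + 1 - (ℓ + 1 - r) = s - ℓ + r by omega]
  calc ∑ ℓ ∈ range (s + 1), b ℓ * ∑ r ∈ range (ℓ + 1), a ℓ r * μ (s - ℓ + r)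
      = (∑ ℓ ∈ range (s + 1), b ℓ * a ℓ ℓ) * μ s +
          ∑ ℓ ∈ range (s + 1), ∑ i ∈ Icc 2 ℓ,
            μ (s + 1 - i) * (b ℓ * a ℓ (ℓ + 1 - i)) := by
        rw [sum_mul, ← sum_add_distrib]
        refine sum_congr rfl fun ℓ hℓ => ?_
        rw [hrow ℓ hℓ, mul_add, mul_sum]
        congr 1
        · ring
        · exact sum_congr rfl fun i _ => by ring
    _ = _ := by
        rw [sum_comm' (t' := Icc 2 s) (s' := fun i => Icc i s)]
        · simp only [mul_sum]
        · intro ℓ i; simp only [mem_range, mem_Icc]; omega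

theorem descFactorial_mul_choose_add (w j i : ℕ) :
    (j + i).descFactorial j * w.choose (j + i) = w.descFactorial j * (w - j).choose i := by
  rw [Nat.descFactorial_eq_factorial_mul_choose, Nat.descFactorial_eq_factorial_mul_choose,
    mul_assoc, mul_comm ((j + i).choose j), Nat.choose_mul (Nat.le_add_right j i),
    Nat.add_sub_cancel_left, mul_assoc]

theorem sum_descFactorial_mul_choose_mul_choose {T w m j : ℕ} (hw : w ≤ T) (hj : j ≤ m) :
    ∑ k ∈ range (m + 1), k.descFactorial j * (w.choose k * (T - w).choose (m - k)) =
      w.descFactorial j * (T - j).choose (m - j) := by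
  obtain ⟨d, rfl⟩ := Nat.exists_eq_add_of_le hj
  have hlow :
      ∑ k ∈ range j, k.descFactorial j * (w.choose k * (T - w).choose (j + d - k)) = 0 :=
    sum_eq_zero fun k hk => by rw [Nat.descFactorial_eq_zero_iff_lt.2 (mem_range.1 hk), zero_mul]
  have hvandermonde : ∑ i ∈ range (d + 1), (w - j).choose i * (T - w).choose (d - i) =
      (w - j + (T - w)).choose d := by
    rw [Nat.add_choose_eq, Nat.sum_antidiagonal_eq_sum_range_succ_mk]
  rw [add_assoc, sum_range_add, hlow, zero_add, Nat.add_sub_cancel_left]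
  simp only [← mul_assoc, descFactorial_mul_choose_add, Nat.add_sub_add_left]
  simp only [mul_assoc, ← mul_sum, hvandermonde]
  rcases le_or_gt j w with hjw | hjw
  · rw [show w - j + (T - w) = T - j by omega]
  · rw [Nat.descFactorial_eq_zero_iff_lt.2 hjw, zero_mul, zero_mul]

/-- The probability of drawing `k` white balls when `m` balls are drawn without replacement
from an urn of `T` balls, `w` of them white. -/
noncomputable def hypergeomWeight (T w m k : ℕ) : ℝ :=
  (Nat.choose w k * Nat.choose (T - w) (m - k) : ℝ) / (Nat.choose T m : ℝ)

theorem sum_hypergeomWeight_mul_descFactorial {T w m : ℕ} (hw : w ≤ T) (hm : m ≤ T)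
    (j : ℕ) :
    ∑ k ∈ range (m + 1), hypergeomWeight T w m k * k.descFactorial j =
      w.descFactorial j * (m.choose j / T.choose j) := by
  rcases le_or_gt j m with hj | hj
  · have hTm : (T.choose m : ℝ) ≠ 0 := by exact_mod_cast (Nat.choose_pos hm).ne'
    have hTj : (T.choose j : ℝ) ≠ 0 := by exact_mod_cast (Nat.choose_pos (hj.trans hm)).ne'
    have hratio : (T.choose m * m.choose j : ℝ) = T.choose j * (T - j).choose (m - j) := by
      exact_mod_cast Nat.choose_mul hj
    have hsum := congrArg (Nat.cast (R := ℝ)) (sum_descFactorial_mul_choose_mul_choose hw hj)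
    push_cast at hsum
    calc ∑ k ∈ range (m + 1), hypergeomWeight T w m k * k.descFactorial j
        = (∑ k ∈ range (m + 1),
              (k.descFactorial j : ℝ) * (w.choose k * (T - w).choose (m - k))) / T.choose m := by
          rw [sum_div]
          exact sum_congr rfl fun k _ => by rw [hypergeomWeight]; ring
      _ = w.descFactorial j * ((T - j).choose (m - j) / T.choose m) := by rw [hsum, mul_div_assoc]
      _ = _ := by
          congr 1
          rw [div_eq_div_iff hTm hTj, mul_comm _ (T.choose j : ℝ), ← hratio, mul_comm]
  · have hzero : ∀ k ∈ range (m + 1), hypergeomWeight T w m k * k.descFactorial j = 0 :=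
      fun k hk => by
        rw [Nat.descFactorial_eq_zero_iff_lt.2 (by have := mem_range.1 hk; omega)]; simp
    rw [sum_eq_zero hzero, Nat.choose_eq_zero_of_lt hj]; simp

noncomputable def hypergeomMomentCoeff (T m ℓ r : ℕ) : ℝ :=
  ∑ j ∈ Icc r ℓ, (-1) ^ (j - r) * (ℓ.stirlingSecond j * j.stirlingFirst r : ℝ) *
    (m.choose j / T.choose j)

theorem sum_hypergeomWeight_mul_pow {T w m : ℕ} (hw : w ≤ T) (hm : m ≤ T) (ℓ : ℕ) :
    ∑ k ∈ range (m + 1), hypergeomWeight T w m k * (k : ℝ) ^ ℓ =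
      ∑ r ∈ range (ℓ + 1), hypergeomMomentCoeff T m ℓ r * (w : ℝ) ^ r := by
  calc ∑ k ∈ range (m + 1), hypergeomWeight T w m k * (k : ℝ) ^ ℓ
      = ∑ j ∈ range (ℓ + 1), (ℓ.stirlingSecond j : ℝ) *
          ∑ k ∈ range (m + 1), hypergeomWeight T w m k * k.descFactorial j := by
        simp only [pow_eq_sum_stirlingSecond_mul_descPochhammer_eval _ ℓ,
          descPochhammer_eval_eq_descFactorial, mul_sum]
        rw [sum_comm]
        exact sum_congr rfl fun j _ => sum_congr rfl fun k _ => by ring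
    _ = ∑ j ∈ range (ℓ + 1), ∑ r ∈ range (j + 1), (-1) ^ (j - r) *
          (ℓ.stirlingSecond j * j.stirlingFirst r : ℝ) * (m.choose j / T.choose j) *
            (w : ℝ) ^ r := by
        refine sum_congr rfl fun j _ => ?_
        rw [sum_hypergeomWeight_mul_descFactorial hw hm,
          ← descPochhammer_eval_eq_descFactorial ℝ, descPochhammer_eval_eq_sum_stirlingFirst,
          sum_mul, mul_sum]
        exact sum_congr rfl fun r _ => by ring
    _ = ∑ r ∈ range (ℓ + 1), ∑ j ∈ Icc r ℓ, (-1) ^ (j - r) *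
          (ℓ.stirlingSecond j * j.stirlingFirst r : ℝ) * (m.choose j / T.choose j) *
            (w : ℝ) ^ r :=
        sum_comm' fun j r => by simp only [mem_range, mem_Icc]; omega
    _ = _ := by simp only [hypergeomMomentCoeff, sum_mul]

theorem hypergeomMomentCoeff_self (T m ℓ : ℕ) :
    hypergeomMomentCoeff T m ℓ ℓ = m.choose ℓ / T.choose ℓ := by
  simp [hypergeomMomentCoeff, Nat.stirlingSecond_self, Nat.stirlingFirst_self]

theorem hypergeomMomentCoeff_zero_right (T m : ℕ) {ℓ : ℕ} (hℓ : 0 < ℓ) :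
    hypergeomMomentCoeff T m ℓ 0 = 0 := by
  refine sum_eq_zero fun j _ => ?_
  obtain ⟨ℓ, rfl⟩ := Nat.exists_eq_add_of_le' hℓ
  rcases j with _ | j <;> simp

theorem sum_hypergeomWeight_mul_add_mul_pow {T w m : ℕ} (hw : w ≤ T) (hm : m ≤ T) (c : ℝ)
    (s : ℕ) :
    ∑ k ∈ range (m + 1), hypergeomWeight T w m k * ((w : ℝ) + c * k) ^ s =
      ∑ ℓ ∈ range (s + 1), s.choose ℓ * c ^ ℓ *
        ∑ r ∈ range (ℓ + 1), hypergeomMomentCoeff T m ℓ r * (w : ℝ) ^ (s - ℓ + r) := by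
  calc ∑ k ∈ range (m + 1), hypergeomWeight T w m k * ((w : ℝ) + c * k) ^ s
      = ∑ ℓ ∈ range (s + 1), s.choose ℓ * c ^ ℓ * (w : ℝ) ^ (s - ℓ) *
          ∑ k ∈ range (m + 1), hypergeomWeight T w m k * (k : ℝ) ^ ℓ := by
        simp only [add_comm (w : ℝ), add_pow, mul_sum]
        rw [sum_comm]
        exact sum_congr rfl fun ℓ _ => sum_congr rfl fun k _ => by ring
    _ = _ := by
        refine sum_congr rfl fun ℓ _ => ?_
        rw [sum_hypergeomWeight_mul_pow hw hm, mul_assoc]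
        simp only [mul_sum, pow_add]
        exact sum_congr rfl fun r _ => by ring

theorem sum_massM_succ_mul (W0 B0 m c n : ℕ) (f : ℕ → ℝ) :
    ∑ v ∈ range (urnT W0 B0 m c (n + 1) + 1), massM W0 B0 m c (n + 1) v * f v =
      ∑ w ∈ range (urnT W0 B0 m c n + 1), massM W0 B0 m c n w *
        ∑ k ∈ range (m + 1), hypergeomWeight (urnT W0 B0 m c n) w m k * f (w + c * k) := by
  simp only [massM, sum_mul, mul_sum]
  rw [sum_comm]
  refine sum_congr rfl fun w hw => ?_
  rw [sum_comm]
  refine sum_congr rfl fun k hk => ?_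
  have hmem : w + c * k ∈ range (urnT W0 B0 m c (n + 1) + 1) := by
    simp only [mem_range, urnT] at hw hk ⊢
    nlinarith
  simp only [ite_mul, zero_mul, sum_ite_eq', hmem, if_true, hypergeomWeight]
  ring

theorem momM_succ {W0 B0 m c n : ℕ} (hm : m ≤ urnT W0 B0 m c n) (s : ℕ) :
    momM W0 B0 m c s (n + 1) =
      ∑ ℓ ∈ range (s + 1), s.choose ℓ * (c : ℝ) ^ ℓ *
        ∑ r ∈ range (ℓ + 1), hypergeomMomentCoeff (urnT W0 B0 m c n) m ℓ r *
          momM W0 B0 m c (s - ℓ + r) n := by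
  calc momM W0 B0 m c s (n + 1)
      = ∑ w ∈ range (urnT W0 B0 m c n + 1), massM W0 B0 m c n w *
          ∑ ℓ ∈ range (s + 1), s.choose ℓ * (c : ℝ) ^ ℓ *
            ∑ r ∈ range (ℓ + 1), hypergeomMomentCoeff (urnT W0 B0 m c n) m ℓ r *
              (w : ℝ) ^ (s - ℓ + r) := by
        rw [momM, sum_massM_succ_mul]
        refine sum_congr rfl fun w hw => ?_
        push_cast
        rw [sum_hypergeomWeight_mul_add_mul_pow (Nat.lt_succ_iff.1 (mem_range.1 hw)) hm]
    _ = _ := by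
        simp only [momM, mul_sum]
        rw [sum_comm]
        refine sum_congr rfl fun ℓ _ => ?_
        rw [sum_comm]
        refine sum_congr rfl fun r _ => ?_
        exact sum_congr rfl fun w _ => by ring

theorem modelM_moment_recurrence_general (W0 B0 m c : ℕ) (hT0 : m ≤ W0 + B0) :
    ∀ n s : ℕ, 1 ≤ n → 1 ≤ s →
      momM W0 B0 m c s n =
        alphaM W0 B0 m c (n - 1) s * momM W0 B0 m c s (n - 1) + betaM W0 B0 m c (n - 1) s := by
  rintro _ s hn -
  obtain ⟨n, rfl⟩ := Nat.exists_eq_add_of_le' hn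
  have hm : m ≤ urnT W0 B0 m c n := hT0.trans (Nat.le_add_right _ _)
  rw [Nat.add_sub_cancel, momM_succ hm, sum_range_mul_sum_range_eq_diag_add_sum_Icc _
    (hypergeomMomentCoeff (urnT W0 B0 m c n) m) (momM W0 B0 m c · n) _
    fun ℓ => hypergeomMomentCoeff_zero_right _ _, alphaM, betaM, stirling1_eq_stirlingFirst,
    stirling2_eq_stirlingSecond]
  congr 1
  · congr 1
    exact sum_congr rfl fun ℓ _ => by rw [hypergeomMomentCoeff_self]; ring
  · refine sum_congr rfl fun i hi => ?_
    congr 1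
    refine sum_congr rfl fun ℓ hℓ => ?_
    rw [hypergeomMomentCoeff]
    congr 1
    refine sum_congr rfl fun j hj => ?_
    simp only [mem_Icc] at hi hℓ hj
    rw [show j - (ℓ + 1 - i) = j + i - 1 - ℓ by omega]
    ring

/-- In model `M`, for `n ≥ 1` and `s ≥ 1` the `s`-th moment satisfies the recurrence
`E(W_n^s) = α_{n−1,s}·E(W_{n−1}^s) + β_{n−1,s}`. -/
theorem modelM_moment_recurrence (W0 B0 m c : ℕ) (hm : 1 ≤ m) (hc : 1 ≤ c)
    (hW0 : 1 ≤ W0) (hB0 : 1 ≤ B0) (hT0 : m ≤ W0 + B0) :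
    ∀ n s : ℕ, 1 ≤ n → 1 ≤ s →
      momM W0 B0 m c s n =
        alphaM W0 B0 m c (n - 1) s * momM W0 B0 m c s (n - 1) + betaM W0 B0 m c (n - 1) s :=
  modelM_moment_recurrence_general W0 B0 m c hT0
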